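/- Let p be a prime and m ≥ 1 an integer. For each α ≥ 1 let B_α denote the number of tuples (x,y) ∈ (ℤ/p^αℤ)^{m+1} × (ℤ/p^αℤ)^{m+1} satisfying x_j y_j = x_{j+1} y_{j+1} for all 1 ≤ j ≤ m. Then the sequence p^{−α(m+2)} B_α converges as α → ∞, with limit (1 − p^{−1})^{m+2} · Σ_{β=0}^∞ (β+1)^{m+1} p^{−β} (a convergent series of real numbers). -/

import Mathlib

/-!
Grouping the tuples by the common value `c = x_j y_j` gives `B = ∑_c N(c)^(m+1)`, where `N(c)`
counts the pairs with `a b = c`. In `ZMod n` the equation `a b = c` has `gcd(n, a)` solutions `b`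
if `gcd(n, a) ∣ c` and none otherwise (the solutions form a coset of the kernel of `b ↦ a b`),
so `N(c) = ∑_{d ∣ gcd(n, c)} d φ(n / d)` depends only on `gcd(n, c)`. For `n = p^α` this gives
`N(c) = (β + 1) φ(p^α)` when `c` has valuation `β < α`, and `N(0) = α φ(p^α) + p^α`. After
normalisation the classes `c ≠ 0` give the partial sums of the series, while the contribution of
`c = 0` is dominated by the `α`-th term of the series and so tends to `0`.
-/

open Filter Finset

open scoped Nat

def chainSet (R : Type*) [Mul R] (m : ℕ) : Set ((Fin (m + 1) → R) × (Fin (m + 1) → R)) :=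
  {xy | ∀ j : Fin m, xy.1 j.castSucc * xy.2 j.castSucc = xy.1 j.succ * xy.2 j.succ}

-- `chainCount (ZMod (p ^ α)) m` is the paper's `B_α`.
noncomputable def chainCount (R : Type*) [Mul R] (m : ℕ) : ℕ :=
  Nat.card (chainSet R m)

lemma chainCount_eq_sum_card_pow {R : Type*} [Mul R] [Fintype R] [DecidableEq R] (m : ℕ) :
    chainCount R m = ∑ c : R, #{ab : R × R | ab.1 * ab.2 = c} ^ (m + 1) := by
  have hconst (s : chainSet R m) (i : Fin (m + 1)) : s.1.1 i * s.1.2 i = s.1.1 0 * s.1.2 0 := by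
    induction i using Fin.induction with
    | zero => rfl
    | succ j ih => exact (s.2 j).symm.trans ih
  let e (c : R) : {s : chainSet R m // s.1.1 0 * s.1.2 0 = c} ≃
      (Fin (m + 1) → {ab : R × R // ab.1 * ab.2 = c}) :=
    { toFun s i := ⟨(s.1.1.1 i, s.1.1.2 i), (hconst s.1 i).trans s.2⟩
      invFun g := ⟨⟨(fun i => (g i).1.1, fun i => (g i).1.2),
        fun j => (g j.castSucc).2.trans (g j.succ).2.symm⟩, (g 0).2⟩
      left_inv _ := rfl
      right_inv _ := rfl }
  rw [chainCount,
    Nat.card_congr (Equiv.sigmaFiberEquiv fun s : chainSet R m => s.1.1 0 * s.1.2 0).symm,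
    Nat.card_sigma]
  refine sum_congr rfl fun c _ => ?_
  rw [Nat.card_congr (e c), Nat.card_fun, Nat.card_eq_fintype_card, Fintype.card_subtype,
    Nat.card_eq_fintype_card, Fintype.card_fin]

namespace AddMonoidHom

variable {G M : Type*} [AddGroup G] [Fintype G] [AddMonoid M] [DecidableEq M]

lemma card_fiber_mul_card_image (f : G →+ M) {c : M} (hc : c ∈ Set.range f) :
    #{g | f g = c} * #(univ.image f) = Fintype.card G := by
  rw [← card_univ, card_eq_sum_card_image f univ, mul_comm, ← smul_eq_mul, ← sum_const]
  refine sum_congr rfl fun b hb => ?_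
  obtain ⟨g, -, rfl⟩ := mem_image.mp hb
  exact card_fiber_eq_of_mem_range f hc ⟨g, rfl⟩

end AddMonoidHom

namespace ZMod

variable {n : ℕ} [NeZero n]

lemma card_filter_dvd_val {d : ℕ} (hd : d ∣ n) : #{c : ZMod n | d ∣ c.val} = n / d := by
  have : NeZero d := ⟨fun h => NeZero.ne n (Nat.eq_zero_of_zero_dvd (h ▸ hd))⟩
  let f := (castHom hd (ZMod d)).toAddMonoidHom
  have hker : ∀ c : ZMod n, f c = 0 ↔ d ∣ c.val := fun c => by
    change (cast c : ZMod d) = 0 ↔ _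
    rw [cast_eq_val, natCast_eq_zero_iff]
  have himage : univ.image f = univ := image_univ_of_surjective (castHom_surjective hd)
  have := f.card_fiber_mul_card_image ⟨0, map_zero f⟩
  simp only [hker, himage, card_univ, ZMod.card] at this
  exact (Nat.div_eq_of_eq_mul_left (Nat.pos_of_neZero d) this.symm).symm

lemma exists_mul_eq_iff (a c : ZMod n) : (∃ b, a * b = c) ↔ n.gcd a.val ∣ c.val := by
  constructor
  · rintro ⟨b, rfl⟩
    rw [val_mul]
    refine (Nat.dvd_mod_iff (Nat.gcd_dvd_left n a.val)).mpr ?_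
    exact (Nat.gcd_dvd_right n a.val).mul_right _
  · rintro ⟨k, hk⟩
    refine ⟨a⁻¹ * k, ?_⟩
    rw [← mul_assoc, mul_inv_eq_gcd, Nat.gcd_comm, ← Nat.cast_mul, ← hk, natCast_zmod_val]

lemma card_filter_mul_left_eq (a c : ZMod n) :
    #{b | a * b = c} = if n.gcd a.val ∣ c.val then n.gcd a.val else 0 := by
  split_ifs with h
  · let f := AddMonoidHom.mulLeft a
    have himage : univ.image f = univ.filter (fun c : ZMod n => n.gcd a.val ∣ c.val) := by
      ext c'
      simp [f, exists_mul_eq_iff]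
    have := f.card_fiber_mul_card_image ((exists_mul_eq_iff a c).mpr h)
    rw [himage, card_filter_dvd_val (Nat.gcd_dvd_left n a.val), ZMod.card] at this
    have hn := Nat.pos_of_neZero n
    have hpos : 0 < n / n.gcd a.val :=
      Nat.div_pos (Nat.gcd_le_left _ hn) (Nat.gcd_pos_of_pos_left _ hn)
    refine Nat.eq_of_mul_eq_mul_right hpos ?_
    exact this.trans (Nat.mul_div_cancel' (Nat.gcd_dvd_left n a.val)).symm
  · rw [card_eq_zero, filter_eq_empty_iff]
    exact fun b _ hb => h ((exists_mul_eq_iff a c).mp ⟨b, hb⟩)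

lemma sum_gcd_val_eq_sum_divisors {M : Type*} [AddCommMonoid M] (F : ℕ → M) :
    ∑ a : ZMod n, F (n.gcd a.val) = ∑ d ∈ n.divisors, φ (n / d) • F d := by
  obtain ⟨k, rfl⟩ : ∃ k, n = k + 1 := Nat.exists_eq_succ_of_ne_zero (NeZero.ne n)
  -- `ZMod (k + 1)` is `Fin (k + 1)`, and `ZMod.val` is `Fin.val`
  rw [show ∑ a : ZMod (k + 1), F ((k + 1).gcd a.val) = ∑ j ∈ range (k + 1), F ((k + 1).gcd j)
    from Fin.sum_univ_eq_sum_range (fun j => F ((k + 1).gcd j)) (k + 1)]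
  rw [← sum_fiberwise_of_maps_to (g := fun j => (k + 1).gcd j) (t := (k + 1).divisors)
    (fun j _ => Nat.mem_divisors.mpr ⟨Nat.gcd_dvd_left _ _, NeZero.ne _⟩)]
  refine sum_congr rfl fun d hd => ?_
  rw [Nat.totient_div_of_dvd (Nat.dvd_of_mem_divisors hd), ← sum_const]
  exact sum_congr rfl fun j hj => by rw [(mem_filter.mp hj).2]

lemma card_filter_mul_eq (c : ZMod n) :
    #{ab : ZMod n × ZMod n | ab.1 * ab.2 = c} =
      ∑ d ∈ n.divisors, φ (n / d) * if d ∣ n.gcd c.val then d else 0 := by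
  rw [card_filter, Fintype.sum_prod_type]
  simp only [← card_filter, card_filter_mul_left_eq]
  rw [sum_gcd_val_eq_sum_divisors fun g => if g ∣ c.val then g else 0]
  refine sum_congr rfl fun d hd => ?_
  simp only [smul_eq_mul, Nat.dvd_gcd_iff, Nat.dvd_of_mem_divisors hd, true_and]

lemma chainCount_eq_sum_divisors (m : ℕ) :
    chainCount (ZMod n) m = ∑ e ∈ n.divisors,
      φ (n / e) * (∑ d ∈ n.divisors, φ (n / d) * if d ∣ e then d else 0) ^ (m + 1) := by
  simp only [chainCount_eq_sum_card_pow, card_filter_mul_eq]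
  exact sum_gcd_val_eq_sum_divisors fun e =>
    (∑ d ∈ n.divisors, φ (n / d) * if d ∣ e then d else 0) ^ (m + 1)

end ZMod

namespace Nat

variable {p : ℕ}

lemma totient_prime_pow_sub_mul_pow (hp : p.Prime) {i α : ℕ} (hi : i < α) :
    φ (p ^ (α - i)) * p ^ i = φ (p ^ α) := by
  rw [totient_prime_pow hp (by omega), totient_prime_pow hp (by omega), mul_right_comm, ← pow_add,
    show α - i - 1 + i = α - 1 by omega]

lemma sum_range_totient_prime_pow_sub_mul_pow (hp : p.Prime) {k α : ℕ} (hk : k ≤ α) :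
    ∑ i ∈ range k, φ (p ^ (α - i)) * p ^ i = k * φ (p ^ α) := by
  rw [sum_congr rfl fun i hi => totient_prime_pow_sub_mul_pow hp (by simp at hi; omega), sum_const,
    card_range, smul_eq_mul]

lemma sum_divisors_prime_pow_ite_dvd (hp : p.Prime) {α β : ℕ} (hβ : β ≤ α) :
    ∑ d ∈ (p ^ α).divisors, φ (p ^ α / d) * (if d ∣ p ^ β then d else 0) =
      ∑ i ∈ range (β + 1), φ (p ^ (α - i)) * p ^ i := by
  rw [sum_divisors_prime_pow hp]
  simp only [pow_dvd_pow_iff_le_right hp.one_lt, mul_ite, mul_zero]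
  rw [← sum_filter, show (range (α + 1)).filter (· ≤ β) = range (β + 1) by ext; simp; omega]
  exact sum_congr rfl fun i hi => by rw [Nat.pow_div (by simp at hi; omega) hp.pos]

lemma cast_totient_prime_pow (hp : p.Prime) {k : ℕ} (hk : 0 < k) :
    (φ (p ^ k) : ℝ) = (1 - (p : ℝ)⁻¹) * (p : ℝ) ^ k := by
  obtain ⟨k, rfl⟩ := exists_eq_succ_of_ne_zero hk.ne'
  have hp0 : (p : ℝ) ≠ 0 := by exact_mod_cast hp.ne_zero
  rw [totient_prime_pow_succ hp]
  push_cast [hp.one_le]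
  rw [pow_succ]
  field_simp

end Nat

lemma chainCount_zmod_prime_pow {p : ℕ} (hp : p.Prime) (α m : ℕ) :
    chainCount (ZMod (p ^ α)) m =
      ∑ β ∈ range α, φ (p ^ (α - β)) * ((β + 1) * φ (p ^ α)) ^ (m + 1) +
        (α * φ (p ^ α) + p ^ α) ^ (m + 1) := by
  have : NeZero (p ^ α) := ⟨pow_ne_zero α hp.ne_zero⟩
  rw [ZMod.chainCount_eq_sum_divisors, Nat.sum_divisors_prime_pow hp, sum_range_succ]
  congr 1
  · refine sum_congr rfl fun β hβ => ?_
    rw [mem_range] at hβ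
    rw [Nat.sum_divisors_prime_pow_ite_dvd hp hβ.le,
      Nat.sum_range_totient_prime_pow_sub_mul_pow hp hβ, Nat.pow_div hβ.le hp.pos]
  · rw [Nat.sum_divisors_prime_pow_ite_dvd hp le_rfl, sum_range_succ,
      Nat.sum_range_totient_prime_pow_sub_mul_pow hp le_rfl, Nat.div_self (pow_pos hp.pos α),
      Nat.sub_self, pow_zero, Nat.totient_one, one_mul, one_mul]

lemma zpow_mul_chainCount_zmod_prime_pow {p : ℕ} (hp : p.Prime) {α : ℕ} (hα : 0 < α)
    (m : ℕ) :
    (p : ℝ) ^ (-((α * (m + 2) : ℕ) : ℤ)) * (chainCount (ZMod (p ^ α)) m : ℝ) =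
      (1 - (p : ℝ)⁻¹) ^ (m + 2) *
          ∑ β ∈ range α, ((β : ℝ) + 1) ^ (m + 1) * (p : ℝ) ^ (-(β : ℤ)) +
        ((α : ℝ) * (1 - (p : ℝ)⁻¹) + 1) ^ (m + 1) * (p : ℝ) ^ (-(α : ℤ)) := by
  have hp0 : (p : ℝ) ≠ 0 := by exact_mod_cast hp.ne_zero
  simp only [chainCount_zmod_prime_pow hp, zpow_neg, zpow_natCast]
  push_cast
  rw [Nat.cast_totient_prime_pow hp hα, mul_add, mul_sum, mul_sum]
  congr 1
  · refine sum_congr rfl fun β hβ => ?_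
    obtain ⟨k, rfl⟩ : ∃ k, α = β + k := ⟨α - β, by simp at hβ; omega⟩
    rw [Nat.cast_totient_prime_pow hp (by simp at hβ; omega), Nat.add_sub_cancel_left]
    generalize 1 - (p : ℝ)⁻¹ = t
    simp only [mul_pow]
    field_simp
    ring
  · generalize 1 - (p : ℝ)⁻¹ = t
    rw [show (α : ℝ) * (t * (p : ℝ) ^ α) + (p : ℝ) ^ α = (α * t + 1) * (p : ℝ) ^ α by ring,
      mul_pow]
    field_simp
    ring

lemma summable_add_one_pow_mul_zpow_neg {q : ℝ} (hq : 1 < q) (k : ℕ) :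
    Summable fun β : ℕ => ((β : ℝ) + 1) ^ k * q ^ (-(β : ℤ)) := by
  have hr : ‖q⁻¹‖ < 1 := by
    rw [norm_inv, Real.norm_of_nonneg (by linarith)]
    exact inv_lt_one_of_one_lt₀ hq
  have h := summable_pow_mul_geometric_of_norm_lt_one k hr
  rw [← summable_nat_add_iff 1] at h
  refine (h.mul_left q).congr fun β => ?_
  have hq0 : q ≠ 0 := by positivity
  push_cast
  rw [zpow_neg, zpow_natCast, inv_pow, pow_succ]
  field_simp

theorem stmt_9_general (p : ℕ) (hp : p.Prime) (m : ℕ) :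
    Summable (fun β : ℕ => ((β : ℝ) + 1) ^ (m + 1) * (p : ℝ) ^ (-(β : ℤ))) ∧
    Tendsto (fun α : ℕ => (p : ℝ) ^ (-((α * (m + 2) : ℕ) : ℤ)) *
        (Nat.card {xy : (Fin (m + 1) → ZMod (p ^ α)) × (Fin (m + 1) → ZMod (p ^ α)) //
          ∀ j : Fin m, xy.1 j.castSucc * xy.2 j.castSucc = xy.1 j.succ * xy.2 j.succ} : ℝ))
      atTop
      (nhds ((1 - (p : ℝ)⁻¹) ^ (m + 2) *
        ∑' β : ℕ, ((β : ℝ) + 1) ^ (m + 1) * (p : ℝ) ^ (-(β : ℤ)))) := by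
  have hp1 : (1 : ℝ) < p := by exact_mod_cast hp.one_lt
  have hsum := summable_add_one_pow_mul_zpow_neg hp1 (m + 1)
  refine ⟨hsum, ?_⟩
  have hhead := hsum.hasSum.tendsto_sum_nat.const_mul ((1 - (p : ℝ)⁻¹) ^ (m + 2))
  have htail : Tendsto (fun α : ℕ => ((α : ℝ) * (1 - (p : ℝ)⁻¹) + 1) ^ (m + 1) *
      (p : ℝ) ^ (-(α : ℤ))) atTop (nhds 0) := by
    have ht0 : 0 ≤ 1 - (p : ℝ)⁻¹ := sub_nonneg.mpr (inv_le_one_of_one_le₀ hp1.le)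
    have ht1 : 1 - (p : ℝ)⁻¹ ≤ 1 := sub_le_self _ (by positivity)
    refine (hsum.of_nonneg_of_le (fun α => by positivity) fun α => ?_).tendsto_atTop_zero
    gcongr
    exact mul_le_of_le_one_right α.cast_nonneg ht1
  rw [← add_zero ((1 - (p : ℝ)⁻¹) ^ (m + 2) * _)]
  exact (hhead.add htail).congr' <| (eventually_gt_atTop 0).mono fun α hα =>
    (zpow_mul_chainCount_zmod_prime_pow hp hα m).symm

theorem stmt_9 (p : ℕ) (hp : p.Prime) (m : ℕ) (hm : 1 ≤ m) :
    Summable (fun β : ℕ => ((β : ℝ) + 1) ^ (m + 1) * (p : ℝ) ^ (-(β : ℤ))) ∧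
    Tendsto (fun α : ℕ => (p : ℝ) ^ (-((α * (m + 2) : ℕ) : ℤ)) *
        (Nat.card {xy : (Fin (m + 1) → ZMod (p ^ α)) × (Fin (m + 1) → ZMod (p ^ α)) //
          ∀ j : Fin m, xy.1 j.castSucc * xy.2 j.castSucc = xy.1 j.succ * xy.2 j.succ} : ℝ))
      atTop
      (nhds ((1 - (p : ℝ)⁻¹) ^ (m + 2) *
        ∑' β : ℕ, ((β : ℝ) + 1) ^ (m + 1) * (p : ℝ) ^ (-(β : ℤ)))) :=
  stmt_9_general p hp m
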